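/- arXiv:1704.00350 — 4 statements merged into one kernel-verified Lean document; each statement's English description precedes it below -/
import Mathlib

section
/- Let $x$ be a real number with $|x| \le 1$. Let $v_1,\dots,v_n$ be real numbers with $\sum_{i=1}^n v_i^2 \le \frac{2}{7}(1+|x|)^2$. Let $a_1,\dots,a_n$ be independent uniform random signs and $Y = \sum_{i=1}^n a_i v_i$. Then $\Pr[|x + Y| \le 1] \ge \frac{37}{98}$. -/
open Finset

private def Ysum {n : ℕ} (v : Fin n → ℝ) (a : Fin n → Bool) : ℝ :=
  ∑ i, (if a i then (1:ℝ) else -1) * v i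

private def flipE (n : ℕ) : (Fin n → Bool) ≃ (Fin n → Bool) where
  toFun a := fun i => !(a i)
  invFun a := fun i => !(a i)
  left_inv a := by funext i; simp
  right_inv a := by funext i; simp

private lemma sign_not (b : Bool) :
    (if (!b) = true then (1:ℝ) else -1) = -(if b = true then (1:ℝ) else -1) := by
  cases b <;> norm_num

private lemma Ysum_flip {n : ℕ} (v : Fin n → ℝ) (a : Fin n → Bool) :
    Ysum v (flipE n a) = - Ysum v a := by
  unfold Ysum flipE
  simp only [Equiv.coe_fn_mk, ← Finset.sum_neg_distrib]
  apply Finset.sum_congr rfl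
  intro i _
  rw [sign_not (a i), neg_mul]

private lemma Ysum_cons {n : ℕ} (v : Fin (n+1) → ℝ) (b : Bool) (a : Fin n → Bool) :
    Ysum v (Fin.cons b a) = (if b then (1:ℝ) else -1) * v 0 + Ysum (fun i => v i.succ) a := by
  unfold Ysum
  rw [Fin.sum_univ_succ]
  simp

private lemma sum_decomp {n : ℕ} (f : (Fin (n+1) → Bool) → ℝ) :
    ∑ a : Fin (n+1) → Bool, f a
      = ∑ a : Fin n → Bool, (f (Fin.cons true a) + f (Fin.cons false a)) := by
  rw [← (Fin.consEquiv (fun _ : Fin (n+1) => Bool)).sum_comp f]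
  rw [Fintype.sum_prod_type]
  rw [Fintype.sum_bool]
  rw [← Finset.sum_add_distrib]
  rfl

private lemma moment2 : ∀ (n : ℕ) (v : Fin n → ℝ),
    ∑ a : Fin n → Bool, (Ysum v a) ^ 2 = 2 ^ n * ∑ i, v i ^ 2 := by
  intro n
  induction n with
  | zero => intro v; simp [Ysum]
  | succ n ih =>
    intro v
    rw [sum_decomp (fun a => (Ysum v a) ^ 2)]
    have h1 : ∀ a : Fin n → Bool,
        (Ysum v (Fin.cons true a)) ^ 2 + (Ysum v (Fin.cons false a)) ^ 2
          = 2 * v 0 ^ 2 + 2 * (Ysum (fun i => v i.succ) a) ^ 2 := by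
      intro a
      rw [Ysum_cons, Ysum_cons]
      norm_num
      ring
    rw [Finset.sum_congr rfl (fun a _ => h1 a), Finset.sum_add_distrib,
      Finset.sum_const, ← Finset.mul_sum, ih]
    rw [Fin.sum_univ_succ]
    simp only [Finset.card_univ, Fintype.card_fun, Fintype.card_bool, Fintype.card_fin,
      nsmul_eq_mul]
    push_cast
    ring

private lemma moment4 : ∀ (n : ℕ) (v : Fin n → ℝ),
    ∑ a : Fin n → Bool, (Ysum v a) ^ 4 ≤ 3 * 2 ^ n * (∑ i, v i ^ 2) ^ 2 := by
  intro n
  induction n with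
  | zero => intro v; simp [Ysum]
  | succ n ih =>
    intro v
    rw [sum_decomp (fun a => (Ysum v a) ^ 4)]
    have h1 : ∀ a : Fin n → Bool,
        (Ysum v (Fin.cons true a)) ^ 4 + (Ysum v (Fin.cons false a)) ^ 4
          = 2 * v 0 ^ 4 + 12 * v 0 ^ 2 * (Ysum (fun i => v i.succ) a) ^ 2
            + 2 * (Ysum (fun i => v i.succ) a) ^ 4 := by
      intro a
      rw [Ysum_cons, Ysum_cons]
      norm_num
      ring
    rw [Finset.sum_congr rfl (fun a _ => h1 a)]
    rw [Finset.sum_add_distrib, Finset.sum_add_distrib, Finset.sum_const,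
      ← Finset.mul_sum, ← Finset.mul_sum, moment2]
    have hih := ih (fun i => v i.succ)
    have hs : (0:ℝ) ≤ ∑ i : Fin n, v i.succ ^ 2 :=
      Finset.sum_nonneg (fun i _ => sq_nonneg _)
    rw [Fin.sum_univ_succ]
    simp only [Finset.card_univ, Fintype.card_fun, Fintype.card_bool, Fintype.card_fin,
      nsmul_eq_mul]
    push_cast
    have h2 : (0:ℝ) < 2 ^ n := by positivity
    have h3 : (3:ℝ) * 2 ^ (n+1) * (v 0 ^ 2 + ∑ i : Fin n, v i.succ ^ 2) ^ 2
        = 6 * 2 ^ n * (v 0 ^ 2 + ∑ i : Fin n, v i.succ ^ 2) ^ 2 := by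
      rw [pow_succ]; ring
    rw [h3]
    nlinarith [hih, mul_nonneg h2.le (sq_nonneg (v 0 ^ 2)), mul_nonneg h2.le (sq_nonneg (v 0)), hs]

private lemma aux (n : ℕ) (x : ℝ) (hx0 : 0 ≤ x) (hx1 : x ≤ 1) (v : Fin n → ℝ)
    (hv : ∑ i, v i ^ 2 ≤ (2 / 7) * (1 + x) ^ 2) :
    (37 : ℝ) / 98 ≤
      (∑ a : Fin n → Bool, if |x + Ysum v a| ≤ 1 then (1:ℝ) else 0) / 2 ^ n := by
  have hc : (0:ℝ) < 1 + x := by linarith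
  have hcard : (Finset.univ : Finset (Fin n → Bool)).card = 2 ^ n := by
    simp [Finset.card_univ]
  -- pointwise bound: 1 ≤ good + pos + low
  have hpt : ∀ a : Fin n → Bool,
      (1:ℝ) ≤ (if |x + Ysum v a| ≤ 1 then (1:ℝ) else 0)
        + ((if 0 < Ysum v a then (1:ℝ) else 0) + (if Ysum v a < -(1+x) then (1:ℝ) else 0)) := by
    intro a
    by_cases h1 : |x + Ysum v a| ≤ 1
    · have : (0:ℝ) ≤ (if 0 < Ysum v a then (1:ℝ) else 0) + (if Ysum v a < -(1+x) then (1:ℝ) else 0) := by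
        split_ifs <;> norm_num
      simp only [h1, if_true]
      linarith
    · by_cases h2 : 0 < Ysum v a
      · have : (0:ℝ) ≤ (if |x + Ysum v a| ≤ 1 then (1:ℝ) else 0) + (if Ysum v a < -(1+x) then (1:ℝ) else 0) := by
          split_ifs <;> norm_num
        simp only [h2, if_true]
        linarith
      · by_cases h3 : Ysum v a < -(1+x)
        · have : (0:ℝ) ≤ (if |x + Ysum v a| ≤ 1 then (1:ℝ) else 0) + (if 0 < Ysum v a then (1:ℝ) else 0) := by
            split_ifs <;> norm_num
          simp only [h3, if_true]
          linarith
        · exfalso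
          push_neg at h2 h3
          exact h1 (abs_le.mpr ⟨by linarith, by linarith⟩)
  -- symmetry: sum over flip
  have hflip : ∀ (f : ℝ → ℝ), ∑ a : Fin n → Bool, f (Ysum v a)
      = ∑ a : Fin n → Bool, f (- Ysum v a) := by
    intro f
    exact Fintype.sum_equiv (flipE n) _ _ (fun a => by rw [Ysum_flip, neg_neg])
  -- pos bound
  have hpos : ∑ a : Fin n → Bool, (if 0 < Ysum v a then (1:ℝ) else 0) ≤ 2 ^ n / 2 := by
    have he : ∑ a : Fin n → Bool, (if 0 < Ysum v a then (1:ℝ) else 0)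
        = ∑ a : Fin n → Bool, (if Ysum v a < 0 then (1:ℝ) else 0) := by
      rw [hflip (fun t => if 0 < t then (1:ℝ) else 0)]
      apply Finset.sum_congr rfl
      intro a _
      simp only [neg_pos]
    have hb : ∑ a : Fin n → Bool, ((if 0 < Ysum v a then (1:ℝ) else 0)
        + (if Ysum v a < 0 then (1:ℝ) else 0)) ≤ ∑ _a : Fin n → Bool, (1:ℝ) := by
      apply Finset.sum_le_sum
      intro a _
      by_cases h : 0 < Ysum v a
      · simp [h, not_lt.mpr (le_of_lt h)]
      · split_ifs <;> norm_num
    rw [Finset.sum_add_distrib, ← he] at hb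
    rw [Finset.sum_const, hcard, nsmul_eq_mul, mul_one] at hb
    push_cast at hb ⊢
    linarith
  -- low bound via 4th moment
  have hlow : ∑ a : Fin n → Bool, (if Ysum v a < -(1+x) then (1:ℝ) else 0)
      ≤ (6:ℝ)/49 * 2 ^ n := by
    have he : ∑ a : Fin n → Bool, (if Ysum v a < -(1+x) then (1:ℝ) else 0)
        = ∑ a : Fin n → Bool, (if 1 + x < Ysum v a then (1:ℝ) else 0) := by
      rw [hflip (fun t => if t < -(1+x) then (1:ℝ) else 0)]
      apply Finset.sum_congr rfl
      intro a _
      simp only [neg_lt_neg_iff]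
    have hb : ∑ a : Fin n → Bool, ((if Ysum v a < -(1+x) then (1:ℝ) else 0)
        + (if 1 + x < Ysum v a then (1:ℝ) else 0))
        ≤ ∑ a : Fin n → Bool, (Ysum v a) ^ 4 / (1+x) ^ 4 := by
      apply Finset.sum_le_sum
      intro a _
      have hpow : (0:ℝ) < (1+x)^4 := by positivity
      split_ifs with h1 h2 h2
      · exfalso; linarith
      · rw [le_div_iff₀ hpow]
        have hsq : (1+x)^2 ≤ (Ysum v a)^2 := by nlinarith
        nlinarith [sq_nonneg ((Ysum v a)^2 - (1+x)^2)]
      · rw [le_div_iff₀ hpow]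
        have hsq : (1+x)^2 ≤ (Ysum v a)^2 := by nlinarith
        nlinarith [sq_nonneg ((Ysum v a)^2 - (1+x)^2)]
      · have : (0:ℝ) ≤ (Ysum v a) ^ 4 / (1+x) ^ 4 := by positivity
        linarith
    have hm4 := moment4 n v
    have hs : (0:ℝ) ≤ ∑ i, v i ^ 2 := Finset.sum_nonneg (fun i _ => sq_nonneg _)
    have hm4' : ∑ a : Fin n → Bool, (Ysum v a) ^ 4 ≤ (12:ℝ)/49 * 2 ^ n * (1+x)^4 := by
      have hsq : (∑ i, v i ^ 2) ^ 2 ≤ ((2:ℝ)/7)^2 * ((1+x)^2)^2 := by nlinarith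
      have h2 : (0:ℝ) < 2 ^ n := by positivity
      nlinarith
    rw [Finset.sum_add_distrib, ← he] at hb
    have hdiv : ∑ a : Fin n → Bool, (Ysum v a) ^ 4 / (1+x) ^ 4
        = (∑ a : Fin n → Bool, (Ysum v a) ^ 4) / (1+x)^4 := by
      rw [Finset.sum_div]
    rw [hdiv] at hb
    have hpow : (0:ℝ) < (1+x)^4 := by positivity
    rw [le_div_iff₀ hpow] at hb
    nlinarith [hb, hm4', hpow]
  -- assemble
  have hsum : (2:ℝ) ^ n ≤ ∑ a : Fin n → Bool, ((if |x + Ysum v a| ≤ 1 then (1:ℝ) else 0)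
      + ((if 0 < Ysum v a then (1:ℝ) else 0) + (if Ysum v a < -(1+x) then (1:ℝ) else 0))) := by
    calc (2:ℝ) ^ n = ∑ _a : Fin n → Bool, (1:ℝ) := by
          rw [Finset.sum_const, hcard, nsmul_eq_mul, mul_one]; push_cast; ring
      _ ≤ _ := Finset.sum_le_sum (fun a _ => hpt a)
  rw [Finset.sum_add_distrib, Finset.sum_add_distrib] at hsum
  rw [le_div_iff₀ (by positivity : (0:ℝ) < (2:ℝ)^n)]
  linarith

theorem lemma_37_98 (n : ℕ) (x : ℝ) (hx : |x| ≤ 1) (v : Fin n → ℝ)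
    (hv : ∑ i, v i ^ 2 ≤ (2 / 7) * (1 + |x|) ^ 2) :
    (37 : ℝ) / 98 ≤
      (∑ a : Fin n → Bool,
        if |x + ∑ i, (if a i then (1:ℝ) else -1) * v i| ≤ 1 then (1:ℝ) else 0) / 2 ^ n := by
  have key := aux n |x| (abs_nonneg x) hx v hv
  have heq : ∑ a : Fin n → Bool, (if abs (|x| + Ysum v a) ≤ 1 then (1:ℝ) else 0)
      = ∑ a : Fin n → Bool, (if abs (x + Ysum v a) ≤ 1 then (1:ℝ) else 0) := by
    rcases abs_choice x with h | h
    · rw [h]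
    · rw [h]
      refine Fintype.sum_equiv (flipE n) _ _ (fun a => ?_)
      rw [Ysum_flip]
      have h2 : x + -Ysum v a = -(-x + Ysum v a) := by ring
      rw [h2, abs_neg]
  rw [heq] at key
  exact key
end

section
/- Let $c \ge 0$, let $x$ be a real number with $|x| \le 1$, and let $v_1,\dots,v_n$ be real numbers with $\sum_{i=1}^n v_i^2 \le c(1+|x|)^2$. Let $a_1,\dots,a_n$ be independent uniform random signs and $Y = \sum_{i=1}^n a_i v_i$. Then $\Pr[|x + Y| \le 1] \ge \frac{1}{2}(1 - 3c^2)$. -/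
open Finset

private lemma cons_sum (n : ℕ) (f : (Fin (n+1) → Bool) → ℝ) :
    ∑ a : Fin (n+1) → Bool, f a = ∑ b : Bool, ∑ a : Fin n → Bool, f (Fin.cons b a) := by
  rw [← (Fin.consEquiv (fun _ => Bool)).sum_comp f, Fintype.sum_prod_type]
  rfl

private lemma sum_sq_nonneg (n : ℕ) (v : Fin n → ℝ) : (0:ℝ) ≤ ∑ i, v i ^ 2 :=
  Finset.sum_nonneg fun i _ => sq_nonneg _

private lemma m2 : ∀ (n : ℕ) (v : Fin n → ℝ),
    ∑ a : Fin n → Bool, (∑ i, (if a i then (1:ℝ) else -1) * v i) ^ 2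
      = 2 ^ n * ∑ i, v i ^ 2 := by
  intro n
  induction n with
  | zero => intro v; simp
  | succ n ih =>
    intro v
    rw [cons_sum n (fun a => (∑ i, (if a i then (1:ℝ) else -1) * v i) ^ 2)]
    simp only [Fin.sum_univ_succ, Fin.cons_zero, Fin.cons_succ, Fintype.sum_bool,
      Bool.false_eq_true, if_true, if_false]
    rw [← Finset.sum_add_distrib]
    have h1 : ∀ a : Fin n → Bool,
        (1 * v 0 + ∑ i, (if a i then (1:ℝ) else -1) * v i.succ) ^ 2
          + (-1 * v 0 + ∑ i, (if a i then (1:ℝ) else -1) * v i.succ) ^ 2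
        = 2 * v 0 ^ 2 + 2 * (∑ i, (if a i then (1:ℝ) else -1) * v i.succ) ^ 2 := by
      intro a; ring
    rw [Finset.sum_congr rfl (fun a _ => h1 a), Finset.sum_add_distrib,
      Finset.sum_const, ← Finset.mul_sum]
    have h2 := ih (fun i => v i.succ)
    rw [h2]
    simp only [nsmul_eq_mul, Finset.card_univ, Fintype.card_fun, Fintype.card_bool,
      Fintype.card_fin]
    push_cast
    ring

private lemma m4 : ∀ (n : ℕ) (v : Fin n → ℝ),
    ∑ a : Fin n → Bool, (∑ i, (if a i then (1:ℝ) else -1) * v i) ^ 4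
      ≤ 2 ^ n * (3 * (∑ i, v i ^ 2) ^ 2) := by
  intro n
  induction n with
  | zero => intro v; simp
  | succ n ih =>
    intro v
    rw [cons_sum n (fun a => (∑ i, (if a i then (1:ℝ) else -1) * v i) ^ 4)]
    simp only [Fin.sum_univ_succ, Fin.cons_zero, Fin.cons_succ, Fintype.sum_bool,
      Bool.false_eq_true, if_true, if_false]
    rw [← Finset.sum_add_distrib]
    have h1 : ∀ a : Fin n → Bool,
        (1 * v 0 + ∑ i, (if a i then (1:ℝ) else -1) * v i.succ) ^ 4
          + (-1 * v 0 + ∑ i, (if a i then (1:ℝ) else -1) * v i.succ) ^ 4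
        = 2 * (∑ i, (if a i then (1:ℝ) else -1) * v i.succ) ^ 4
          + 12 * v 0 ^ 2 * (∑ i, (if a i then (1:ℝ) else -1) * v i.succ) ^ 2
          + 2 * v 0 ^ 4 := by
      intro a; ring
    rw [Finset.sum_congr rfl (fun a _ => h1 a), Finset.sum_add_distrib,
      Finset.sum_add_distrib, Finset.sum_const]
    have h2 := ih (fun i => v i.succ)
    have h3 := m2 n (fun i => v i.succ)
    have h4 : ∑ a : Fin n → Bool,
        2 * (∑ i, (if a i then (1:ℝ) else -1) * v i.succ) ^ 4
        ≤ 2 * (2 ^ n * (3 * (∑ i : Fin n, v i.succ ^ 2) ^ 2)) := by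
      rw [← Finset.mul_sum]; linarith
    have h5 : ∑ a : Fin n → Bool,
        12 * v 0 ^ 2 * (∑ i, (if a i then (1:ℝ) else -1) * v i.succ) ^ 2
        = 12 * v 0 ^ 2 * (2 ^ n * ∑ i : Fin n, v i.succ ^ 2) := by
      rw [← Finset.mul_sum, h3]
    rw [h5]
    have hcard : ((Finset.univ : Finset (Fin n → Bool)).card • (2 * v 0 ^ 4) : ℝ)
        = 2 ^ n * (2 * v 0 ^ 4) := by
      simp only [nsmul_eq_mul, Finset.card_univ, Fintype.card_fun, Fintype.card_bool,
        Fintype.card_fin]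
      push_cast; ring
    rw [hcard]
    have hS : (0:ℝ) ≤ ∑ i : Fin n, v i.succ ^ 2 := sum_sq_nonneg n _
    have h6 : (2:ℝ)^(n+1) = 2 * 2^n := by ring
    nlinarith [h4, mul_nonneg (pow_nonneg (show (0:ℝ) ≤ 2 by norm_num) n)
      (sq_nonneg (v 0 ^ 2)),
      mul_nonneg (mul_nonneg (pow_nonneg (show (0:ℝ) ≤ 2 by norm_num) n)
      (sq_nonneg (v 0))) hS]

theorem lemma_F (c : ℝ) (hc : 0 ≤ c) (n : ℕ) (x : ℝ) (hx : |x| ≤ 1) (v : Fin n → ℝ)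
    (hv : ∑ i, v i ^ 2 ≤ c * (1 + |x|) ^ 2) :
    (1 / 2) * (1 - 3 * c ^ 2) ≤
      (∑ a : Fin n → Bool,
        if |x + ∑ i, (if a i then (1:ℝ) else -1) * v i| ≤ 1 then (1:ℝ) else 0) / 2 ^ n := by
  set Y : (Fin n → Bool) → ℝ := fun a => ∑ i, (if a i then (1:ℝ) else -1) * v i with hY
  set g : (Fin n → Bool) → ℝ := fun a => if |x + Y a| ≤ 1 then (0:ℝ) else 1 with hg
  have hpos : (0:ℝ) < 1 + |x| := by positivity
  have hD : (0:ℝ) < (1 + |x|) ^ 4 := by positivity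
  have hnot : ∀ (b : Bool) (t : ℝ),
      (if (!b) = true then (1:ℝ) else -1) * t = -((if b = true then 1 else -1) * t) := by
    intro b t; cases b <;> simp
  -- involution
  have hYneg : ∀ a : Fin n → Bool, Y (fun i => !(a i)) = - Y a := by
    intro a
    simp only [hY]
    rw [← Finset.sum_neg_distrib]
    exact Finset.sum_congr rfl fun i _ => hnot (a i) (v i)
  -- pointwise claim
  have hpt : ∀ a : Fin n → Bool,
      g a + g (fun i => !(a i)) ≤ 1 + (Y a) ^ 4 / (1 + |x|) ^ 4 := by
    intro a
    have hdiv : (0:ℝ) ≤ (Y a) ^ 4 / (1 + |x|) ^ 4 := by positivity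
    have hgle : ∀ b : Fin n → Bool, g b ≤ 1 := by
      intro b; simp only [hg]; split <;> norm_num
    have hgnn : ∀ b : Fin n → Bool, 0 ≤ g b := by
      intro b; simp only [hg]; split <;> norm_num
    by_cases h1 : |x + Y a| ≤ 1
    · have : g a = 0 := by simp [hg, h1]
      rw [this]
      linarith [hgle (fun i => !(a i))]
    · by_cases h2 : |x + Y (fun i => !(a i))| ≤ 1
      · have : g (fun i => !(a i)) = 0 := by simp [hg, h2]
        rw [this]
        linarith [hgle a]
      · -- both fail
        have hga : g a = 1 := by simp [hg, h1]
        have hgb : g (fun i => !(a i)) = 1 := by simp [hg, h2]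
        rw [hga, hgb]
        have h2n : ¬ |x + -Y a| ≤ 1 := by rw [← hYneg a]; exact h2
        have h1' := lt_abs.mp (not_le.mp h1)
        have h2' := lt_abs.mp (not_le.mp h2n)
        have hxx := abs_le.mp hx
        have hY2 : 1 + |x| ≤ |Y a| := by
          rcases h1' with h | h <;> rcases h2' with h' | h'
          · linarith
          · have hle : 1 + |x| ≤ Y a := by
              rcases abs_cases x with ⟨he, _⟩ | ⟨he, _⟩ <;> rw [he] <;> linarith
            exact hle.trans (le_abs_self _)
          · have hle : 1 + |x| ≤ -(Y a) := by
              rcases abs_cases x with ⟨he, _⟩ | ⟨he, _⟩ <;> rw [he] <;> linarith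
            exact hle.trans (neg_le_abs _)
          · linarith
        have h0 : (0:ℝ) ≤ 1 + |x| := le_of_lt hpos
        have hkey : (1 + |x|) ^ 4 ≤ (Y a) ^ 4 := by
          calc (1 + |x|) ^ 4 ≤ |Y a| ^ 4 := pow_le_pow_left₀ h0 hY2 4
          _ = (Y a) ^ 4 := by
              rw [pow_abs, abs_of_nonneg (by positivity)]
        have : (1:ℝ) ≤ (Y a) ^ 4 / (1 + |x|) ^ 4 := (one_le_div hD).mpr hkey
        linarith
  -- sum the claim
  have hinv : Function.Involutive (fun a : Fin n → Bool => fun i => !(a i)) := by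
    intro a; funext i; simp
  have hre : ∑ a : Fin n → Bool, g (fun i => !(a i)) = ∑ a, g a :=
    Fintype.sum_bijective _ hinv.bijective _ _ (fun a => rfl)
  have hm4 := m4 n v
  have hS : (0:ℝ) ≤ ∑ i, v i ^ 2 := sum_sq_nonneg n v
  have hsum4 : ∑ a : Fin n → Bool, (Y a) ^ 4 ≤ 2 ^ n * (3 * c ^ 2 * (1 + |x|) ^ 4) := by
    have hsq : (∑ i, v i ^ 2) ^ 2 ≤ (c * (1 + |x|) ^ 2) ^ 2 := by nlinarith
    calc ∑ a : Fin n → Bool, (Y a) ^ 4 ≤ 2 ^ n * (3 * (∑ i, v i ^ 2) ^ 2) := hm4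
    _ ≤ 2 ^ n * (3 * c ^ 2 * (1 + |x|) ^ 4) := by
        have h2n : (0:ℝ) ≤ 2 ^ n := by positivity
        nlinarith
  have hcard : ((Finset.univ : Finset (Fin n → Bool)).card : ℝ) = 2 ^ n := by
    simp only [Finset.card_univ, Fintype.card_fun, Fintype.card_bool, Fintype.card_fin]
    push_cast; ring
  have hg2 : 2 * ∑ a : Fin n → Bool, g a ≤ 2 ^ n + 2 ^ n * (3 * c ^ 2) := by
    have hsum := Finset.sum_le_sum
      (fun a (_ : a ∈ (Finset.univ : Finset (Fin n → Bool))) => hpt a)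
    rw [Finset.sum_add_distrib, Finset.sum_add_distrib, Finset.sum_const, hre] at hsum
    simp only [nsmul_eq_mul, mul_one] at hsum
    rw [hcard] at hsum
    have hdivsum : ∑ a : Fin n → Bool, (Y a) ^ 4 / (1 + |x|) ^ 4 ≤ 2 ^ n * (3 * c ^ 2) := by
      rw [← Finset.sum_div, div_le_iff₀ hD]
      calc ∑ a : Fin n → Bool, (Y a) ^ 4 ≤ 2 ^ n * (3 * c ^ 2 * (1 + |x|) ^ 4) := hsum4
      _ = 2 ^ n * (3 * c ^ 2) * (1 + |x|) ^ 4 := by ring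
    linarith
  -- convert goal
  have h2n : (0:ℝ) < 2 ^ n := by positivity
  rw [le_div_iff₀ h2n]
  have hfg : ∑ a : Fin n → Bool,
      (if |x + Y a| ≤ 1 then (1:ℝ) else 0) = 2 ^ n - ∑ a, g a := by
    rw [eq_sub_iff_add_eq, ← Finset.sum_add_distrib]
    have hone : ∀ a : Fin n → Bool, (if |x + Y a| ≤ 1 then (1:ℝ) else 0) + g a = 1 := by
      intro a; by_cases h : |x + Y a| ≤ 1 <;> simp [hg, h]
    rw [Finset.sum_congr rfl (fun a _ => hone a), Finset.sum_const]
    simp only [nsmul_eq_mul, mul_one]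
    exact hcard
  rw [hfg]
  linarith
end

section
/- For every integer $K \ge 2$, $\frac{1}{2^{K-1}} F\!\left(\frac{(K+1)^2 - K}{(2K+1)^2}\right) + \left(1 - \frac{1}{2^{K-1}}\right) F\!\left(\frac{(K+1)^2 - (K+2)}{(2K+1)^2}\right) > \frac{13}{32}$, where $F(c) = \frac{1}{2}(1 - 3c^2)$. -/
theorem weighted_average (K : ℕ) (hK : 2 ≤ K) :
    (13 : ℝ) / 32 <
      (1 / 2 ^ (K - 1)) *
          ((1 / 2) * (1 - 3 * ((((K : ℝ) + 1) ^ 2 - K) / (2 * K + 1) ^ 2) ^ 2))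
        + (1 - 1 / 2 ^ (K - 1)) *
          ((1 / 2) * (1 - 3 * ((((K : ℝ) + 1) ^ 2 - ((K : ℝ) + 2)) / (2 * K + 1) ^ 2) ^ 2)) := by
  set k : ℝ := (K : ℝ) with hk
  have hk2 : (2 : ℝ) ≤ k := by rw [hk]; exact_mod_cast hK
  have hp2 : (2 : ℝ) ≤ 2 ^ (K - 1) := by
    calc (2:ℝ) = 2 ^ 1 := by norm_num
    _ ≤ 2 ^ (K - 1) := by
      apply pow_le_pow_right₀ (by norm_num)
      omega
  set p : ℝ := 2 ^ (K - 1) with hpdef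
  have hp0 : (0 : ℝ) < p := by linarith
  have hd : (0 : ℝ) < (2 * k + 1) ^ 2 := by positivity
  have hpk : k ≤ p := by
    rw [hpdef, hk]
    calc (K:ℝ) = ((K:ℕ):ℝ) := by norm_num
    _ ≤ ((2^(K-1) : ℕ) : ℝ) := by
        have := Nat.lt_two_pow_self (n := K - 1)
        exact_mod_cast (by omega : K ≤ 2 ^ (K - 1))
    _ = 2 ^ (K - 1) := by push_cast; ring
  have hq : (0:ℝ) ≤ 40 * k ^ 2 + 40 * k - 15 := by nlinarith
  have h1 : 2 * (40 * k ^ 2 + 40 * k - 15) ≤ p * (40 * k ^ 2 + 40 * k - 15) :=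
    mul_le_mul_of_nonneg_right hp2 hq
  have h2 : 64 * (k ^ 2 + k) < 2 * (40 * k ^ 2 + 40 * k - 15) := by nlinarith
  rw [show (13:ℝ)/32 = 13/32 by rfl]
  rw [← sub_pos]
  have hexp : (1 / p) * ((1 / 2) * (1 - 3 * (((k + 1) ^ 2 - k) / (2 * k + 1) ^ 2) ^ 2))
        + (1 - 1 / p) * ((1 / 2) * (1 - 3 * (((k + 1) ^ 2 - (k + 2)) / (2 * k + 1) ^ 2) ^ 2))
        - 13 / 32
      = 3 * (p * (40 * k ^ 2 + 40 * k - 15) - 64 * (k ^ 2 + k)) / (32 * p * (2 * k + 1) ^ 4) := by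
    field_simp
    ring
  rw [hexp]
  apply div_pos
  · nlinarith
  · positivity
end

section
/- Let $v_1 \ge v_2 \ge \dots \ge v_n \ge 0$ be real numbers (it suffices that $v_K \ge v_{K+1} \ge v_{K+2}$ among the relevant entries) with partial sums $M_t = \sum_{i=1}^t v_i$, and suppose $K$ is the smallest nonnegative integer $t$ with $t = n-1$ or $M_t > 1 - v_{t+1}$, with $K \le n-4$. For a sign vector $(a_1,\dots,a_n)$, let $X_t = \sum_{i=1}^t a_i v_i$ and let $T$ be the smallest nonnegative $t$ with $t = n-1$ or $|X_t| > 1 - v_{t+1}$. If the signs $a_1,\dots,a_K$ are not all equal, then $T \ge K+2$. -/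
lemma sum_sign_le_aux (v a : ℕ → ℝ) (K : ℕ)
    (hv : ∀ i ∈ Finset.Icc 1 K, 0 ≤ v i)
    (ha : ∀ i ∈ Finset.Icc 1 K, a i ≤ 1)
    (j : ℕ) (hj : j ∈ Finset.Icc 1 K) (haj : a j = -1) :
    ∑ i ∈ Finset.Icc 1 K, a i * v i ≤ ∑ i ∈ Finset.Icc 1 K, v i - 2 * v j := by
  have h1 : ∑ i ∈ (Finset.Icc 1 K).erase j, a i * v i + a j * v j
      = ∑ i ∈ Finset.Icc 1 K, a i * v i := Finset.sum_erase_add _ _ hj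
  have h2 : ∑ i ∈ (Finset.Icc 1 K).erase j, v i + v j
      = ∑ i ∈ Finset.Icc 1 K, v i := Finset.sum_erase_add _ _ hj
  have h3 : ∑ i ∈ (Finset.Icc 1 K).erase j, a i * v i
      ≤ ∑ i ∈ (Finset.Icc 1 K).erase j, v i := by
    refine Finset.sum_le_sum fun i hi => ?_
    have hi' := Finset.mem_of_mem_erase hi
    exact mul_le_of_le_one_left (hv i hi') (ha i hi')
  have := hv j hj
  rw [haj] at h1
  linarith

theorem not_all_equal_signs (n : ℕ) (v : ℕ → ℝ)
    (hnonneg : ∀ i ∈ Finset.Icc 1 n, 0 ≤ v i)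
    (hmono : ∀ i ∈ Finset.Icc 1 n, ∀ j ∈ Finset.Icc 1 n, i ≤ j → v j ≤ v i)
    (K : ℕ)
    (hKstop : K = n - 1 ∨ (∑ i ∈ Finset.Icc 1 K, v i) > 1 - v (K + 1))
    (hKmin : ∀ t < K, ¬(t = n - 1 ∨ (∑ i ∈ Finset.Icc 1 t, v i) > 1 - v (t + 1)))
    (hKn : K ≤ n - 4)
    (a : ℕ → ℝ) (ha : ∀ i ∈ Finset.Icc 1 n, a i = 1 ∨ a i = -1)
    (hne : ∃ i ∈ Finset.Icc 1 K, ∃ j ∈ Finset.Icc 1 K, a i ≠ a j) :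
    ∀ t < K + 2,
      ¬(t = n - 1 ∨ |∑ i ∈ Finset.Icc 1 t, a i * v i| > 1 - v (t + 1)) := by
  obtain ⟨i0, hi0, j0, hj0, hij⟩ := hne
  simp only [Finset.mem_Icc] at hi0 hj0
  -- K ≥ 2 and n ≥ K + 4
  have hij' : i0 ≠ j0 := fun h => hij (h ▸ rfl)
  have hK2 : 2 ≤ K := by omega
  have hn : K + 4 ≤ n := by omega
  -- membership helper
  have memn : ∀ i, 1 ≤ i → i ≤ n → i ∈ Finset.Icc 1 n := fun i h1 h2 =>
    Finset.mem_Icc.mpr ⟨h1, h2⟩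
  -- find a positive and a negative index in [1, K]
  obtain ⟨iP, hiP, iN, hiN, haP, haN⟩ :
      ∃ iP, (1 ≤ iP ∧ iP ≤ K) ∧ ∃ iN, (1 ≤ iN ∧ iN ≤ K) ∧ a iP = 1 ∧ a iN = -1 := by
    rcases ha i0 (memn i0 hi0.1 (by omega)) with h1 | h1 <;>
      rcases ha j0 (memn j0 hj0.1 (by omega)) with h2 | h2
    · exact absurd (h1.trans h2.symm) hij
    · exact ⟨i0, hi0, j0, hj0, h1, h2⟩
    · exact ⟨j0, hj0, i0, hi0, h2, h1⟩
    · exact absurd (h1.trans h2.symm) hij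
  have hvK : ∀ i, 1 ≤ i → i ≤ K → 0 ≤ v i := fun i h1 h2 =>
    hnonneg i (memn i h1 (by omega))
  have haK1 : ∀ i ∈ Finset.Icc 1 K, a i ≤ 1 := by
    intro i hi
    rw [Finset.mem_Icc] at hi
    rcases ha i (memn i hi.1 (by omega)) with h | h <;> rw [h] <;> norm_num
  have haK1' : ∀ i ∈ Finset.Icc 1 K, -a i ≤ 1 := by
    intro i hi
    rw [Finset.mem_Icc] at hi
    rcases ha i (memn i hi.1 (by omega)) with h | h <;> rw [h] <;> norm_num
  -- key bound : |X_K| ≤ M_K - 2 v K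
  have hvNK : v K ≤ v iN := hmono iN (memn iN hiN.1 (by omega)) K (memn K (by omega) (by omega)) hiN.2
  have hvPK : v K ≤ v iP := hmono iP (memn iP hiP.1 (by omega)) K (memn K (by omega) (by omega)) hiP.2
  have hup : ∑ i ∈ Finset.Icc 1 K, a i * v i ≤ ∑ i ∈ Finset.Icc 1 K, v i - 2 * v K := by
    have := sum_sign_le_aux v a K (fun i hi => hvK i (Finset.mem_Icc.mp hi).1 (Finset.mem_Icc.mp hi).2)
      haK1 iN (Finset.mem_Icc.mpr hiN) haN
    linarith
  have hdown : -(∑ i ∈ Finset.Icc 1 K, a i * v i) ≤ ∑ i ∈ Finset.Icc 1 K, v i - 2 * v K := by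
    have := sum_sign_le_aux v (fun i => -a i) K
      (fun i hi => hvK i (Finset.mem_Icc.mp hi).1 (Finset.mem_Icc.mp hi).2)
      haK1' iP (Finset.mem_Icc.mpr hiP) (by simp [haP])
    simp only [neg_mul] at this
    have h' : ∑ x ∈ Finset.Icc 1 K, -(a x * v x) = -∑ x ∈ Finset.Icc 1 K, a x * v x := by
      simp
    rw [h'] at this
    linarith
  have habsK : |∑ i ∈ Finset.Icc 1 K, a i * v i| ≤ ∑ i ∈ Finset.Icc 1 K, v i - 2 * v K :=
    abs_le.mpr ⟨by linarith, hup⟩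
  -- M_{K-1} ≤ 1 - v K
  have hprev := hKmin (K - 1) (by omega)
  push_neg at hprev
  have hKm1 : K - 1 + 1 = K := by omega
  rw [hKm1] at hprev
  have hMKm1 : ∑ i ∈ Finset.Icc 1 (K - 1), v i ≤ 1 - v K := hprev.2
  -- M_K = M_{K-1} + v K
  have hMK : ∑ i ∈ Finset.Icc 1 K, v i = ∑ i ∈ Finset.Icc 1 (K - 1), v i + v K := by
    have h' := Finset.sum_Icc_succ_top (a := 1) (b := K - 1) (by omega) v
    rw [hKm1] at h'
    exact h'
  have hvK1 : v (K + 1) ≤ v K :=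
    hmono K (memn K (by omega) (by omega)) (K + 1) (memn (K + 1) (by omega) (by omega)) (by omega)
  have hvK2 : v (K + 2) ≤ v K :=
    hmono K (memn K (by omega) (by omega)) (K + 2) (memn (K + 2) (by omega) (by omega)) (by omega)
  have hvK0 : 0 ≤ v K := hvK K (by omega) le_rfl
  -- main proof
  intro t ht
  rintro (h | h)
  · omega
  · -- |X_t| > 1 - v (t+1), derive contradiction
    rcases lt_or_ge t K with htK | htK
    · have hmin := hKmin t htK
      push_neg at hmin
      have habs : |∑ i ∈ Finset.Icc 1 t, a i * v i| ≤ ∑ i ∈ Finset.Icc 1 t, v i := by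
        calc |∑ i ∈ Finset.Icc 1 t, a i * v i| ≤ ∑ i ∈ Finset.Icc 1 t, |a i * v i| :=
              Finset.abs_sum_le_sum_abs _ _
          _ ≤ ∑ i ∈ Finset.Icc 1 t, v i := by
              refine Finset.sum_le_sum fun i hi => ?_
              rw [Finset.mem_Icc] at hi
              have hvi := hvK i hi.1 (by omega)
              rcases ha i (memn i hi.1 (by omega)) with h' | h' <;>
                rw [abs_mul, h'] <;> simp [abs_of_nonneg hvi]
      linarith [hmin.2]
    · have hXK : |∑ i ∈ Finset.Icc 1 K, a i * v i| ≤ 1 - 2 * v K := by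
        linarith
      have htcases : t = K ∨ t = K + 1 := by omega
      rcases htcases with rfl | rfl
      · -- t = K
        linarith
      · -- t = K + 1
        have hsum : ∑ i ∈ Finset.Icc 1 (K + 1), a i * v i
            = ∑ i ∈ Finset.Icc 1 K, a i * v i + a (K + 1) * v (K + 1) :=
          Finset.sum_Icc_succ_top (by omega) _
        have hvK10 : 0 ≤ v (K + 1) := hnonneg _ (memn (K + 1) (by omega) (by omega))
        have habs1 : |a (K + 1) * v (K + 1)| = v (K + 1) := by
          rcases ha (K + 1) (memn (K + 1) (by omega) (by omega)) with h' | h' <;>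
            rw [abs_mul, h'] <;> simp [abs_of_nonneg hvK10]
        have : |∑ i ∈ Finset.Icc 1 (K + 1), a i * v i|
            ≤ |∑ i ∈ Finset.Icc 1 K, a i * v i| + v (K + 1) := by
          have h2 := abs_add_le (∑ i ∈ Finset.Icc 1 K, a i * v i) (a (K + 1) * v (K + 1))
          rw [habs1] at h2
          rw [hsum]; exact h2
        linarith
end
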